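/- If 0 ≤ c < 1, then the entries of every iterate of the LSimRank sequence are uniformly bounded: for all m ∈ ℕ and all i,j, one has 0 ≤ (S_m)_{ij} ≤ 1/(1−c). -/

import Mathlib

/-!
The interval `[0, B]` with `B = 1/(1-c)` is invariant under the LSimRank map: if every entry of
`S` lies in `[0, B]`, then `(Aᵀ S A)ᵢⱼ ≤ indeg i · indeg j · B`, so the normalization brings
the correction term down to at most `B`, and the new entries lie in `[0, 1 + c B] = [0, B]`.
-/

open Matrix

variable {n : ℕ}

/-- The in-degree of vertex `j` in the graph with adjacency matrix `A`. -/
noncomputable def indeg (A : Matrix (Fin n) (Fin n) ℝ) (j : Fin n) : ℝ :=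
  ∑ u, A u j

/-- The normalization matrix: `N i j = 1/(indeg i · indeg j)` for `i ≠ j` (with the
convention that this is `0` when the product of in-degrees is `0`, since in `ℝ` we
have `0⁻¹ = 0`), and `N i i = 0`. -/
noncomputable def normMat (A : Matrix (Fin n) (Fin n) ℝ) : Matrix (Fin n) (Fin n) ℝ :=
  Matrix.of fun i j => if i = j then 0 else (indeg A i * indeg A j)⁻¹

/-- The LSimRank iteration map `F(S) = I + c · (L ∘ N ∘ (Aᵀ S A))`,
where `∘` is the entrywise (Hadamard) product. -/
noncomputable def lsimStep (A L : Matrix (Fin n) (Fin n) ℝ) (c : ℝ)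
    (S : Matrix (Fin n) (Fin n) ℝ) : Matrix (Fin n) (Fin n) ℝ :=
  1 + c • (Matrix.hadamard L (Matrix.hadamard (normMat A) (Aᵀ * S * A)))

/-- The LSimRank sequence: `S 0 = I`, `S (m+1) = F (S m)`. -/
noncomputable def lsimSeq (A L : Matrix (Fin n) (Fin n) ℝ) (c : ℝ) :
    ℕ → Matrix (Fin n) (Fin n) ℝ
  | 0 => 1
  | m + 1 => lsimStep A L c (lsimSeq A L c m)

variable {A L S : Matrix (Fin n) (Fin n) ℝ} {c B : ℝ}

lemma indeg_nonneg (hA : ∀ i j, 0 ≤ A i j) (j : Fin n) : 0 ≤ indeg A j :=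
  Finset.sum_nonneg fun u _ => hA u j

lemma normMat_nonneg (hA : ∀ i j, 0 ≤ A i j) (i j : Fin n) : 0 ≤ normMat A i j := by
  rw [normMat, of_apply]
  split_ifs
  · exact le_rfl
  · exact inv_nonneg.mpr (mul_nonneg (indeg_nonneg hA i) (indeg_nonneg hA j))

lemma transpose_mul_mul_apply_nonneg (hA : ∀ i j, 0 ≤ A i j) (hS : ∀ i j, 0 ≤ S i j)
    (i j : Fin n) : 0 ≤ (Aᵀ * S * A) i j := by
  simp only [mul_apply, transpose_apply]
  exact Finset.sum_nonneg fun x _ =>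
    mul_nonneg (Finset.sum_nonneg fun y _ => mul_nonneg (hA y i) (hS y x)) (hA x j)

lemma transpose_mul_mul_apply_le (hA : ∀ i j, 0 ≤ A i j)
    (hS : ∀ i j, S i j ≤ B) (i j : Fin n) :
    (Aᵀ * S * A) i j ≤ indeg A i * indeg A j * B := by
  simp only [mul_apply, transpose_apply]
  calc ∑ x, (∑ y, A y i * S y x) * A x j
      ≤ ∑ x, (∑ y, A y i * B) * A x j := by
        gcongr with x _ y _
        · exact hA x j
        · exact hA y i
        · exact hS y x
    _ = indeg A i * indeg A j * B := by
        rw [← Finset.sum_mul, ← Finset.mul_sum, indeg, indeg]; ring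

lemma normMat_mul_transpose_mul_mul_apply_le (hA : ∀ i j, 0 ≤ A i j)
    (hB : 0 ≤ B) (hS : ∀ i j, S i j ≤ B) (i j : Fin n) :
    normMat A i j * (Aᵀ * S * A) i j ≤ B := by
  rw [normMat, of_apply]
  split_ifs
  · simpa using hB
  · rcases (mul_nonneg (indeg_nonneg hA i) (indeg_nonneg hA j)).eq_or_lt with hd | hd
    · simpa [← hd] using hB
    · rw [inv_mul_le_iff₀ hd]
      exact transpose_mul_mul_apply_le hA hS i j

lemma lsimStep_apply (i j : Fin n) :
    lsimStep A L c S i j =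
      (1 : Matrix (Fin n) (Fin n) ℝ) i j + c * (L i j * (normMat A i j * (Aᵀ * S * A) i j)) := by
  simp only [lsimStep, Matrix.add_apply, Matrix.smul_apply, hadamard_apply, smul_eq_mul]

lemma lsimStep_apply_mem_Icc (hA : ∀ i j, 0 ≤ A i j) (hL0 : ∀ i j, 0 ≤ L i j)
    (hL1 : ∀ i j, L i j ≤ 1) (hc : 0 ≤ c) (hS : ∀ i j, S i j ∈ Set.Icc 0 B) (i j : Fin n) :
    lsimStep A L c S i j ∈ Set.Icc 0 (1 + c * B) := by
  have hB : 0 ≤ B := (hS i j).1.trans (hS i j).2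
  have hN : 0 ≤ normMat A i j * (Aᵀ * S * A) i j :=
    mul_nonneg (normMat_nonneg hA i j)
      (transpose_mul_mul_apply_nonneg hA (fun i j => (hS i j).1) i j)
  have hNB : normMat A i j * (Aᵀ * S * A) i j ≤ B :=
    normMat_mul_transpose_mul_mul_apply_le hA hB (fun i j => (hS i j).2) i j
  have hLNB : L i j * (normMat A i j * (Aᵀ * S * A) i j) ≤ B := by
    simpa using mul_le_mul (hL1 i j) hNB hN zero_le_one
  have hI : (1 : Matrix (Fin n) (Fin n) ℝ) i j ∈ Set.Icc 0 1 := by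
    rw [one_apply]; split_ifs <;> norm_num
  rw [lsimStep_apply]
  exact ⟨add_nonneg hI.1 (mul_nonneg hc (mul_nonneg (hL0 i j) hN)),
    add_le_add hI.2 (mul_le_mul_of_nonneg_left hLNB hc)⟩

/-- for `0 ≤ c < 1`, the entries of every iterate of the LSimRank
sequence are uniformly bounded between `0` and `1/(1-c)`. -/
theorem lsimSeq_entries_bounded (A L : Matrix (Fin n) (Fin n) ℝ)
    (hA : ∀ i j, A i j = 0 ∨ A i j = 1)
    (hL0 : ∀ i j, 0 ≤ L i j) (hL1 : ∀ i j, L i j ≤ 1)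
    (c : ℝ) (hc0 : 0 ≤ c) (hc1 : c < 1) :
    ∀ (m : ℕ) (i j : Fin n),
      0 ≤ lsimSeq A L c m i j ∧ lsimSeq A L c m i j ≤ 1 / (1 - c) := by
  have hA' : ∀ i j, 0 ≤ A i j := fun i j => by rcases hA i j with h | h <;> simp [h]
  have hB1 : 1 ≤ 1 / (1 - c) := by rw [le_div_iff₀ (by linarith)]; linarith
  have hfix : 1 + c * (1 / (1 - c)) = 1 / (1 - c) := by
    field_simp [show 1 - c ≠ 0 by linarith]; ring
  intro m
  induction m with
  | zero =>
    intro i j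
    rw [lsimSeq, one_apply]
    split_ifs <;> constructor <;> linarith
  | succ m ih =>
    intro i j
    rw [lsimSeq, ← hfix]
    exact lsimStep_apply_mem_Icc hA' hL0 hL1 hc0 ih i j
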